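/- arXiv:1212.4932 — 3 statements merged into one kernel-verified Lean document; each statement's English description precedes it below -/
import Mathlib

section
/- For the function q defined by q(t) = -t for -1 < t ≤ 0, q(t) = t for 0 < t ≤ 2, q(t) = -t+4 for 2 < t ≤ 3, the quantity D(t) = (q'(t)+q'(t-1))² - 2q'(t)(2q'(t)+q'(t-1)+q'(t+1)) equals -4 for t ∈ (0,1) but equals 0 for t ∈ (1,2); hence D is not constant on (0,2). -/
/-- The piecewise linear candidate extremal: `q(t) = -t` for `t ≤ 0`,
`q(t) = t` for `0 < t ≤ 2`, `q(t) = -t + 4` for `t > 2`. -/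
noncomputable def qex : ℝ → ℝ := fun t =>
  if t ≤ 0 then -t else if t ≤ 2 then t else -t + 4

/-- The DuBois–Reymond expression with delay `τ = 1`. -/
noncomputable def Dex : ℝ → ℝ := fun t =>
  (deriv qex t + deriv qex (t - 1)) ^ 2
    - 2 * deriv qex t *
      (2 * deriv qex t + deriv qex (t - 1) + deriv qex (t + 1))

lemma deriv_neg_part {t : ℝ} (h : t < 0) : deriv qex t = -1 := by
  have h1 : qex =ᶠ[nhds t] fun s => -s := by
    filter_upwards [Iio_mem_nhds h] with s hs
    simp [qex, le_of_lt (Set.mem_Iio.mp hs)]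
  rw [h1.deriv_eq]
  simp

lemma deriv_mid_part {t : ℝ} (h0 : 0 < t) (h2 : t < 2) : deriv qex t = 1 := by
  have h1 : qex =ᶠ[nhds t] fun s => s := by
    filter_upwards [Ioo_mem_nhds h0 h2] with s hs
    simp [qex, not_le.mpr hs.1, le_of_lt hs.2]
  rw [h1.deriv_eq]
  simp

lemma deriv_hi_part {t : ℝ} (h : 2 < t) : deriv qex t = -1 := by
  have h1 : qex =ᶠ[nhds t] fun s => -s + 4 := by
    filter_upwards [Ioi_mem_nhds h] with s hs
    have : ¬ s ≤ 0 := by linarith [Set.mem_Ioi.mp hs]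
    have : ¬ s ≤ 2 := not_le.mpr hs
    simp [qex, *]
  rw [h1.deriv_eq]
  have : deriv (fun s : ℝ => -s + 4) t = -1 := by
    rw [deriv_add_const]
    simp
  exact this

/-- `Dex` equals `-4` on `(0,1)`, equals `0` on `(1,2)`, hence is not
constant on `(0,2)`. -/
theorem stmt_2 :
    (∀ t ∈ Set.Ioo (0 : ℝ) 1, Dex t = -4) ∧
    (∀ t ∈ Set.Ioo (1 : ℝ) 2, Dex t = 0) ∧
    ¬ ∃ c : ℝ, ∀ t ∈ Set.Ioo (0 : ℝ) 2, Dex t = c := by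
  have H1 : ∀ t ∈ Set.Ioo (0 : ℝ) 1, Dex t = -4 := by
    intro t ⟨h0, h1⟩
    have d1 : deriv qex t = 1 := deriv_mid_part h0 (by linarith)
    have d2 : deriv qex (t - 1) = -1 := deriv_neg_part (by linarith)
    have d3 : deriv qex (t + 1) = 1 := deriv_mid_part (by linarith) (by linarith)
    simp [Dex, d1, d2, d3]; ring
  have H2 : ∀ t ∈ Set.Ioo (1 : ℝ) 2, Dex t = 0 := by
    intro t ⟨h1, h2⟩
    have d1 : deriv qex t = 1 := deriv_mid_part (by linarith) h2
    have d2 : deriv qex (t - 1) = 1 := deriv_mid_part (by linarith) (by linarith)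
    have d3 : deriv qex (t + 1) = -1 := deriv_hi_part (by linarith)
    simp [Dex, d1, d2, d3]; ring
  refine ⟨H1, H2, ?_⟩
  rintro ⟨c, hc⟩
  have e1 : Dex (1/2) = -4 := H1 _ ⟨by norm_num, by norm_num⟩
  have e2 : Dex (3/2) = 0 := H2 _ ⟨by norm_num, by norm_num⟩
  have c1 := hc (1/2) ⟨by norm_num, by norm_num⟩
  have c2 := hc (3/2) ⟨by norm_num, by norm_num⟩
  rw [e1] at c1; rw [e2] at c2; linarith
end

section
/- Suppose q is C² on [t₁, t₂-τ] and satisfies both the delayed Euler--Lagrange equation d/dt[∂₃L[q]_τ(t)+∂₅L[q]_τ(t+τ)] = ∂₂L[q]_τ(t)+∂₄L[q]_τ(t+τ) and the delayed DuBois--Reymond condition d/dt{L[q]_τ(t) − q'(t)·(∂₃L[q]_τ(t)+∂₅L[q]_τ(t+τ))} = ∂₁L[q]_τ(t). Assume invariance gives the pointwise identity −Φ'(t) + ∂₁L[q]_τ(t)η(t) + (∂₂L[q]_τ(t)+∂₄L[q]_τ(t+τ))·ξ(t) + (∂₃L[q]_τ(t)+∂₅L[q]_τ(t+τ))·(ξ'(t)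 − q'(t)η'(t)) + L[q]_τ(t)η'(t) = 0 on [t₁, t₂-τ], where η, ξ, Φ are C¹ along q. Then the quantity C(t) = −Φ(t) + (∂₃L[q]_τ(t)+∂₅L[q]_τ(t+τ))·ξ(t) + (L[q]_τ(t) − q'(t)·(∂₃L[q]_τ(t)+∂₅L[q]_τ(t+τ)))η(t) has zero derivative, hence is constant on [t₁, t₂-τ]. -/
open Set
open scoped RealInnerProductSpace

noncomputable section

variable {n : ℕ}

/-- `L[q]_τ(t) = L(t, q(t), q'(t), q(t-τ), q'(t-τ))`. -/
def Lq (L : ℝ → EuclideanSpace ℝ (Fin n) → EuclideanSpace ℝ (Fin n) →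
      EuclideanSpace ℝ (Fin n) → EuclideanSpace ℝ (Fin n) → ℝ)
    (q : ℝ → EuclideanSpace ℝ (Fin n)) (τ t : ℝ) : ℝ :=
  L t (q t) (deriv q t) (q (t - τ)) (deriv q (t - τ))

/-- `∂₁L[q]_τ(t)`: partial derivative of `L` in its first slot along `[q]_τ`. -/
def P1 (L : ℝ → EuclideanSpace ℝ (Fin n) → EuclideanSpace ℝ (Fin n) →
      EuclideanSpace ℝ (Fin n) → EuclideanSpace ℝ (Fin n) → ℝ)
    (q : ℝ → EuclideanSpace ℝ (Fin n)) (τ t : ℝ) : ℝ :=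
  deriv (fun s => L s (q t) (deriv q t) (q (t - τ)) (deriv q (t - τ))) t

/-- `∂₂L[q]_τ(t)` as a gradient. -/
def P2 (L : ℝ → EuclideanSpace ℝ (Fin n) → EuclideanSpace ℝ (Fin n) →
      EuclideanSpace ℝ (Fin n) → EuclideanSpace ℝ (Fin n) → ℝ)
    (q : ℝ → EuclideanSpace ℝ (Fin n)) (τ t : ℝ) : EuclideanSpace ℝ (Fin n) :=
  gradient (fun v => L t v (deriv q t) (q (t - τ)) (deriv q (t - τ))) (q t)

/-- `∂₃L[q]_τ(t)` as a gradient. -/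
def P3 (L : ℝ → EuclideanSpace ℝ (Fin n) → EuclideanSpace ℝ (Fin n) →
      EuclideanSpace ℝ (Fin n) → EuclideanSpace ℝ (Fin n) → ℝ)
    (q : ℝ → EuclideanSpace ℝ (Fin n)) (τ t : ℝ) : EuclideanSpace ℝ (Fin n) :=
  gradient (fun v => L t (q t) v (q (t - τ)) (deriv q (t - τ))) (deriv q t)

/-- `∂₄L[q]_τ(t)` as a gradient. -/
def P4 (L : ℝ → EuclideanSpace ℝ (Fin n) → EuclideanSpace ℝ (Fin n) →
      EuclideanSpace ℝ (Fin n) → EuclideanSpace ℝ (Fin n) → ℝ)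
    (q : ℝ → EuclideanSpace ℝ (Fin n)) (τ t : ℝ) : EuclideanSpace ℝ (Fin n) :=
  gradient (fun v => L t (q t) (deriv q t) v (deriv q (t - τ))) (q (t - τ))

/-- `∂₅L[q]_τ(t)` as a gradient. -/
def P5 (L : ℝ → EuclideanSpace ℝ (Fin n) → EuclideanSpace ℝ (Fin n) →
      EuclideanSpace ℝ (Fin n) → EuclideanSpace ℝ (Fin n) → ℝ)
    (q : ℝ → EuclideanSpace ℝ (Fin n)) (τ t : ℝ) : EuclideanSpace ℝ (Fin n) :=
  gradient (fun v => L t (q t) (deriv q t) (q (t - τ)) v) (deriv q (t - τ))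


open InnerProductSpace in
/-- Gradient of a function precomposed with an affine slot-inclusion. -/
lemma gradient_comp_affine' {F : Type*} [NormedAddCommGroup F] [InnerProductSpace ℝ F]
    [CompleteSpace F] {P : Type*} [NormedAddCommGroup P] [NormedSpace ℝ P]
    {Lf : P → ℝ} {c : F → P} {ι : F →L[ℝ] P} {x : F}
    (hc : HasFDerivAt c ι x) (hLf : DifferentiableAt ℝ Lf (c x)) :
    gradient (fun v => Lf (c v)) x
      = (toDual ℝ F).symm ((fderiv ℝ Lf (c x)).comp ι) := by
  unfold gradient
  congr 1
  exact (hLf.hasFDerivAt.comp x hc).fderiv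

/-- Pointwise core of Noether's symmetry theorem with time delay up to a
gauge term (first interval): along a `C²` function `q` satisfying the delayed
Euler–Lagrange equation and the delayed DuBois–Reymond condition on
`[t₁, t₂-τ]`, and given the pointwise invariance identity for `C¹` data
`η, ξ, Φ`, the Noether quantity
`C(t) = −Φ(t) + (∂₃L + ∂₅L(t+τ))·ξ(t) + (L − q'·(∂₃L + ∂₅L(t+τ)))η(t)`
has zero derivative, hence is constant, on `[t₁, t₂-τ]`. -/
theorem stmt_14 {n : ℕ}
    (L : ℝ → EuclideanSpace ℝ (Fin n) → EuclideanSpace ℝ (Fin n) →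
      EuclideanSpace ℝ (Fin n) → EuclideanSpace ℝ (Fin n) → ℝ)
    (hL : ContDiff ℝ 2 (fun p : ℝ × EuclideanSpace ℝ (Fin n) ×
        EuclideanSpace ℝ (Fin n) × EuclideanSpace ℝ (Fin n) ×
        EuclideanSpace ℝ (Fin n) => L p.1 p.2.1 p.2.2.1 p.2.2.2.1 p.2.2.2.2))
    (q : ℝ → EuclideanSpace ℝ (Fin n)) (hq : ContDiff ℝ 2 q)
    (t₁ t₂ τ : ℝ) (hτ : 0 < τ) (hτ' : τ < t₂ - t₁)
    (η Φ : ℝ → ℝ) (ξ : ℝ → EuclideanSpace ℝ (Fin n))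
    (hη : ContDiff ℝ 1 η) (hξ : ContDiff ℝ 1 ξ) (hΦ : ContDiff ℝ 1 Φ)
    (hEL : ∀ t ∈ Icc t₁ (t₂ - τ),
      deriv (fun s => P3 L q τ s + P5 L q τ (s + τ)) t
        = P2 L q τ t + P4 L q τ (t + τ))
    (hDR : ∀ t ∈ Icc t₁ (t₂ - τ),
      deriv (fun s => Lq L q τ s
          - ⟪deriv q s, P3 L q τ s + P5 L q τ (s + τ)⟫) t
        = P1 L q τ t)
    (hInv : ∀ t ∈ Icc t₁ (t₂ - τ),
      -deriv Φ t + P1 L q τ t * η t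
        + ⟪P2 L q τ t + P4 L q τ (t + τ), ξ t⟫
        + ⟪P3 L q τ t + P5 L q τ (t + τ), deriv ξ t - deriv η t • deriv q t⟫
        + Lq L q τ t * deriv η t = 0) :
    (∀ t ∈ Icc t₁ (t₂ - τ),
      deriv (fun s => -Φ s + ⟪P3 L q τ s + P5 L q τ (s + τ), ξ s⟫
        + (Lq L q τ s - ⟪deriv q s, P3 L q τ s + P5 L q τ (s + τ)⟫) * η s) t
        = 0) ∧
    ∃ c : ℝ, ∀ t ∈ Icc t₁ (t₂ - τ),
      -Φ t + ⟪P3 L q τ t + P5 L q τ (t + τ), ξ t⟫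
        + (Lq L q τ t - ⟪deriv q t, P3 L q τ t + P5 L q τ (t + τ)⟫) * η t
        = c := by
  classical
  set Lf : (ℝ × (EuclideanSpace ℝ (Fin n)) × (EuclideanSpace ℝ (Fin n)) × (EuclideanSpace ℝ (Fin n)) × (EuclideanSpace ℝ (Fin n))) → ℝ := fun p => L p.1 p.2.1 p.2.2.1 p.2.2.2.1 p.2.2.2.2 with hLf_def
  set curve : ℝ → (ℝ × (EuclideanSpace ℝ (Fin n)) × (EuclideanSpace ℝ (Fin n)) × (EuclideanSpace ℝ (Fin n)) × (EuclideanSpace ℝ (Fin n))) := fun s => (s, q s, deriv q s, q (s - τ), deriv q (s - τ)) with hcurve_def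
  have hq1 : Differentiable ℝ q := hq.differentiable (by norm_num)
  have hdq : ContDiff ℝ 1 (deriv q) := by
    have h2 : ContDiff ℝ (1 + 1 : ℕ) q := by exact_mod_cast hq
    exact (contDiff_succ_iff_deriv.mp h2).2.2
  have hdq1 : Differentiable ℝ (deriv q) := hdq.differentiable one_ne_zero
  have hcurve : Differentiable ℝ curve :=
    differentiable_id.prodMk (hq1.prodMk (hdq1.prodMk
      ((hq1.comp (differentiable_id.sub_const τ)).prodMk
        (hdq1.comp (differentiable_id.sub_const τ)))))
  have hLfd : Differentiable ℝ Lf := hL.differentiable (by norm_num)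
  have hfd : ContDiff ℝ 1 (fderiv ℝ Lf) := hL.fderiv_right (by norm_num)
  set ι₃ : (EuclideanSpace ℝ (Fin n)) →L[ℝ] (ℝ × (EuclideanSpace ℝ (Fin n)) × (EuclideanSpace ℝ (Fin n)) × (EuclideanSpace ℝ (Fin n)) × (EuclideanSpace ℝ (Fin n))) := (0 : (EuclideanSpace ℝ (Fin n)) →L[ℝ] ℝ).prod ((0 : (EuclideanSpace ℝ (Fin n)) →L[ℝ] (EuclideanSpace ℝ (Fin n))).prod
    ((ContinuousLinearMap.id ℝ (EuclideanSpace ℝ (Fin n))).prod ((0 : (EuclideanSpace ℝ (Fin n)) →L[ℝ] (EuclideanSpace ℝ (Fin n))).prod (0 : (EuclideanSpace ℝ (Fin n)) →L[ℝ] (EuclideanSpace ℝ (Fin n)))))) with hι₃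
  set ι₅ : (EuclideanSpace ℝ (Fin n)) →L[ℝ] (ℝ × (EuclideanSpace ℝ (Fin n)) × (EuclideanSpace ℝ (Fin n)) × (EuclideanSpace ℝ (Fin n)) × (EuclideanSpace ℝ (Fin n))) := (0 : (EuclideanSpace ℝ (Fin n)) →L[ℝ] ℝ).prod ((0 : (EuclideanSpace ℝ (Fin n)) →L[ℝ] (EuclideanSpace ℝ (Fin n))).prod
    ((0 : (EuclideanSpace ℝ (Fin n)) →L[ℝ] (EuclideanSpace ℝ (Fin n))).prod ((0 : (EuclideanSpace ℝ (Fin n)) →L[ℝ] (EuclideanSpace ℝ (Fin n))).prod (ContinuousLinearMap.id ℝ (EuclideanSpace ℝ (Fin n)))))) with hι₅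
  set G₃ : (ℝ × (EuclideanSpace ℝ (Fin n)) × (EuclideanSpace ℝ (Fin n)) × (EuclideanSpace ℝ (Fin n)) × (EuclideanSpace ℝ (Fin n))) → (EuclideanSpace ℝ (Fin n)) :=
    fun p => (InnerProductSpace.toDual ℝ (EuclideanSpace ℝ (Fin n))).symm ((fderiv ℝ Lf p).comp ι₃) with hG₃
  set G₅ : (ℝ × (EuclideanSpace ℝ (Fin n)) × (EuclideanSpace ℝ (Fin n)) × (EuclideanSpace ℝ (Fin n)) × (EuclideanSpace ℝ (Fin n))) → (EuclideanSpace ℝ (Fin n)) :=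
    fun p => (InnerProductSpace.toDual ℝ (EuclideanSpace ℝ (Fin n))).symm ((fderiv ℝ Lf p).comp ι₅) with hG₅
  have hP3 : ∀ t, P3 L q τ t = G₃ (curve t) := fun t =>
    gradient_comp_affine' (Lf := Lf) (c := fun v => (t, q t, v, q (t - τ), deriv q (t - τ))) (ι := ι₃) (x := deriv q t)
      (HasFDerivAt.prodMk (hasFDerivAt_const _ _) (HasFDerivAt.prodMk (hasFDerivAt_const _ _)
        (HasFDerivAt.prodMk (hasFDerivAt_id _) (HasFDerivAt.prodMk (hasFDerivAt_const _ _) (hasFDerivAt_const _ _)))))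
      (hLfd _)
  have hP5 : ∀ t, P5 L q τ t = G₅ (curve t) := fun t =>
    gradient_comp_affine' (Lf := Lf) (c := fun v => (t, q t, deriv q t, q (t - τ), v)) (ι := ι₅) (x := deriv q (t - τ))
      (HasFDerivAt.prodMk (hasFDerivAt_const _ _) (HasFDerivAt.prodMk (hasFDerivAt_const _ _)
        (HasFDerivAt.prodMk (hasFDerivAt_const _ _) (HasFDerivAt.prodMk (hasFDerivAt_const _ _) (hasFDerivAt_id _)))))
      (hLfd _)
  have hGdiff : ∀ ι : (EuclideanSpace ℝ (Fin n)) →L[ℝ] (ℝ × (EuclideanSpace ℝ (Fin n)) × (EuclideanSpace ℝ (Fin n)) × (EuclideanSpace ℝ (Fin n)) × (EuclideanSpace ℝ (Fin n))),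
      Differentiable ℝ (fun p : (ℝ × (EuclideanSpace ℝ (Fin n)) × (EuclideanSpace ℝ (Fin n)) × (EuclideanSpace ℝ (Fin n)) × (EuclideanSpace ℝ (Fin n))) =>
        (InnerProductSpace.toDual ℝ (EuclideanSpace ℝ (Fin n))).symm ((fderiv ℝ Lf p).comp ι)) := by
    intro ι
    have h1 : Differentiable ℝ (fun p : (ℝ × (EuclideanSpace ℝ (Fin n)) × (EuclideanSpace ℝ (Fin n)) × (EuclideanSpace ℝ (Fin n)) × (EuclideanSpace ℝ (Fin n))) => (fderiv ℝ Lf p).comp ι) := by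
      have := (((ContinuousLinearMap.compL ℝ (EuclideanSpace ℝ (Fin n)) (ℝ × (EuclideanSpace ℝ (Fin n)) × (EuclideanSpace ℝ (Fin n)) × (EuclideanSpace ℝ (Fin n)) × (EuclideanSpace ℝ (Fin n))) ℝ).flip ι).differentiable).comp
        (hfd.differentiable one_ne_zero)
      exact this
    exact ((InnerProductSpace.toDual ℝ (EuclideanSpace ℝ (Fin n))).symm.toContinuousLinearEquiv.differentiable).comp h1
  have hG₃d : Differentiable ℝ G₃ := hGdiff ι₃
  have hG₅d : Differentiable ℝ G₅ := hGdiff ι₅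
  have hpdiff : Differentiable ℝ (fun s => P3 L q τ s + P5 L q τ (s + τ)) := by
    have : (fun s => P3 L q τ s + P5 L q τ (s + τ))
        = fun s => G₃ (curve s) + G₅ (curve (s + τ)) := by
      funext s; rw [hP3, hP5]
    rw [this]
    exact (hG₃d.comp hcurve).add
      ((hG₅d.comp hcurve).comp (differentiable_id.add_const τ))
  have hLqdiff : Differentiable ℝ (fun s => Lq L q τ s) := hLfd.comp hcurve
  have hEdiff : Differentiable ℝ
      (fun s => Lq L q τ s - ⟪deriv q s, P3 L q τ s + P5 L q τ (s + τ)⟫) :=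
    hLqdiff.sub (hdq1.inner ℝ hpdiff)
  have hΦd : Differentiable ℝ Φ := hΦ.differentiable one_ne_zero
  have hηd : Differentiable ℝ η := hη.differentiable one_ne_zero
  have hξd : Differentiable ℝ ξ := hξ.differentiable one_ne_zero
  have hCdiff : Differentiable ℝ (fun s => -Φ s + ⟪P3 L q τ s + P5 L q τ (s + τ), ξ s⟫
      + (Lq L q τ s - ⟪deriv q s, P3 L q τ s + P5 L q τ (s + τ)⟫) * η s) :=
    (hΦd.neg.add (hpdiff.inner ℝ hξd)).add (hEdiff.mul hηd)
  have key : ∀ t ∈ Icc t₁ (t₂ - τ),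
      deriv (fun s => -Φ s + ⟪P3 L q τ s + P5 L q τ (s + τ), ξ s⟫
        + (Lq L q τ s - ⟪deriv q s, P3 L q τ s + P5 L q τ (s + τ)⟫) * η s) t = 0 := by
    intro t ht
    have hp : HasDerivAt (fun s => P3 L q τ s + P5 L q τ (s + τ))
        (P2 L q τ t + P4 L q τ (t + τ)) t := by
      have := (hpdiff t).hasDerivAt
      rwa [hEL t ht] at this
    have hE : HasDerivAt (fun s => Lq L q τ s
        - ⟪deriv q s, P3 L q τ s + P5 L q τ (s + τ)⟫) (P1 L q τ t) t := by
      have := (hEdiff t).hasDerivAt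
      rwa [hDR t ht] at this
    have hC : HasDerivAt (fun s => -Φ s + ⟪P3 L q τ s + P5 L q τ (s + τ), ξ s⟫
        + (Lq L q τ s - ⟪deriv q s, P3 L q τ s + P5 L q τ (s + τ)⟫) * η s)
        (-(deriv Φ t)
          + (⟪P3 L q τ t + P5 L q τ (t + τ), deriv ξ t⟫
            + ⟪P2 L q τ t + P4 L q τ (t + τ), ξ t⟫)
          + (P1 L q τ t * η t
            + (Lq L q τ t - ⟪deriv q t, P3 L q τ t + P5 L q τ (t + τ)⟫) * deriv η t)) t :=
      (((hΦd t).hasDerivAt.neg).add (hp.inner ℝ (hξd t).hasDerivAt)).add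
        (hE.mul (hηd t).hasDerivAt)
    rw [hC.deriv]
    have hinv := hInv t ht
    rw [inner_sub_right, real_inner_smul_right] at hinv
    rw [real_inner_comm (P3 L q τ t + P5 L q τ (t + τ)) (deriv q t)]
    ring_nf
    ring_nf at hinv
    linarith
  refine ⟨key, ?_⟩
  have hle : t₁ ≤ t₂ - τ := by linarith
  refine ⟨-Φ t₁ + ⟪P3 L q τ t₁ + P5 L q τ (t₁ + τ), ξ t₁⟫
    + (Lq L q τ t₁ - ⟪deriv q t₁, P3 L q τ t₁ + P5 L q τ (t₁ + τ)⟫) * η t₁, ?_⟩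
  intro t ht
  refine constant_of_has_deriv_right_zero (hCdiff.continuous.continuousOn) ?_ t ht
  intro x hx
  have h0 := key x ⟨hx.1, hx.2.le⟩
  have := (hCdiff x).hasDerivAt
  rw [h0] at this
  exact this.hasDerivWithinAt


end
end

section
/- Under the same hypotheses restricted to the interval [t₂-τ, t₂] — i.e., q C², the Euler--Lagrange equation d/dt ∂₃L[q]_τ(t) = ∂₂L[q]_τ(t), the DuBois--Reymond condition d/dt{L[q]_τ(t) − q'(t)·∂₃L[q]_τ(t)} = ∂₁L[q]_τ(t), and the invariance identity −Φ'(t) + ∂₁L[q]_τ(t)η(t) + ∂₂L[q]_τ(t)·ξ(t) + ∂₃L[q]_τ(t)·(ξ'(t) − q'(t)η'(t)) + L[q]_τ(t)η'(t) = 0 — the quantity C(t) = −Φ(t) + ∂₃L[q]_τ(t)·ξ(t) + (L[q]_τ(t) − q'(t)·∂₃L[q]_τ(t))η(t) is constant on [t₂-τ, t₂]. -/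
open Set
open scoped RealInnerProductSpace

noncomputable section

variable {n : ℕ}

/- auxiliary machinery -/
abbrev Esp (n : ℕ) := EuclideanSpace ℝ (Fin n)
abbrev Xsp (n : ℕ) := ℝ × Esp n × Esp n × Esp n × Esp n

/-- inclusion into the third vector slot -/
def iota3 (n : ℕ) : Esp n →L[ℝ] Xsp n :=
  (0 : Esp n →L[ℝ] ℝ).prod ((0 : Esp n →L[ℝ] Esp n).prod
    ((ContinuousLinearMap.id ℝ (Esp n)).prod
      ((0 : Esp n →L[ℝ] Esp n).prod (0 : Esp n →L[ℝ] Esp n))))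

theorem slot3_hasFDeriv {n : ℕ} (F : Xsp n → ℝ) (hF : ContDiff ℝ 2 F)
    (t : ℝ) (a b c : Esp n) (x : Esp n) :
    HasFDerivAt (fun v : Esp n => F (t, a, v, b, c))
      ((fderiv ℝ F (t, a, x, b, c)).comp (iota3 n)) x := by
  have hg : HasFDerivAt (fun v : Esp n => ((t, a, v, b, c) : Xsp n)) (iota3 n) x :=
    (hasFDerivAt_const t x).prodMk ((hasFDerivAt_const a x).prodMk
      ((hasFDerivAt_id x).prodMk ((hasFDerivAt_const b x).prodMk (hasFDerivAt_const c x))))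
  exact ((hF.differentiable (by norm_num)).differentiableAt.hasFDerivAt).comp x hg

theorem Gdiff {n : ℕ} (F : Xsp n → ℝ) (hF : ContDiff ℝ 2 F) :
    ContDiff ℝ 1 (fun p => (InnerProductSpace.toDual ℝ (Esp n)).symm
      ((fderiv ℝ F p).comp (iota3 n))) := by
  have h1 : ContDiff ℝ 1 (fderiv ℝ F) := hF.fderiv_right (by norm_num)
  have h2 : ContDiff ℝ 1 (fun p => (fderiv ℝ F p).comp (iota3 n)) :=
    ((ContinuousLinearMap.compL ℝ (Esp n) (Xsp n) ℝ).flip (iota3 n)).contDiff.comp h1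
  exact (InnerProductSpace.toDual ℝ (Esp n)).symm.contDiff.comp h2

theorem curveC1 {n : ℕ} (q : ℝ → Esp n) (hq : ContDiff ℝ 2 q) (τ : ℝ) :
    ContDiff ℝ 1 (fun t => ((t, q t, deriv q t, q (t - τ), deriv q (t - τ)) : Xsp n)) := by
  have hdq : ContDiff ℝ 1 (deriv q) := by
    have := (contDiff_succ_iff_deriv (n := 1) (f := q)).mp (by exact_mod_cast hq)
    exact this.2.2
  have hsub : ContDiff ℝ 2 (fun t : ℝ => t - τ) := contDiff_id.sub contDiff_const
  exact contDiff_id.prodMk ((hq.of_le (by norm_num)).prodMk (hdq.prodMk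
    (((hq.comp hsub).of_le (by norm_num)).prodMk (hdq.comp (hsub.of_le (by norm_num))))))

/-- Pointwise core of Noether's symmetry theorem with time delay up to a
gauge term (second interval `[t₂-τ, t₂]`): under the Euler–Lagrange equation
`d/dt ∂₃L = ∂₂L`, the DuBois–Reymond condition
`d/dt{L − q'·∂₃L} = ∂₁L`, and the invariance identity, the quantity
`C(t) = −Φ(t) + ∂₃L·ξ(t) + (L − q'·∂₃L)η(t)` is constant on `[t₂-τ, t₂]`. -/
theorem stmt_15 {n : ℕ}
    (L : ℝ → EuclideanSpace ℝ (Fin n) → EuclideanSpace ℝ (Fin n) →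
      EuclideanSpace ℝ (Fin n) → EuclideanSpace ℝ (Fin n) → ℝ)
    (hL : ContDiff ℝ 2 (fun p : ℝ × EuclideanSpace ℝ (Fin n) ×
        EuclideanSpace ℝ (Fin n) × EuclideanSpace ℝ (Fin n) ×
        EuclideanSpace ℝ (Fin n) => L p.1 p.2.1 p.2.2.1 p.2.2.2.1 p.2.2.2.2))
    (q : ℝ → EuclideanSpace ℝ (Fin n)) (hq : ContDiff ℝ 2 q)
    (t₁ t₂ τ : ℝ) (hτ : 0 < τ) (hτ' : τ < t₂ - t₁)
    (η Φ : ℝ → ℝ) (ξ : ℝ → EuclideanSpace ℝ (Fin n))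
    (hη : ContDiff ℝ 1 η) (hξ : ContDiff ℝ 1 ξ) (hΦ : ContDiff ℝ 1 Φ)
    (hEL : ∀ t ∈ Icc (t₂ - τ) t₂,
      deriv (fun s => P3 L q τ s) t = P2 L q τ t)
    (hDR : ∀ t ∈ Icc (t₂ - τ) t₂,
      deriv (fun s => Lq L q τ s - ⟪deriv q s, P3 L q τ s⟫) t
        = P1 L q τ t)
    (hInv : ∀ t ∈ Icc (t₂ - τ) t₂,
      -deriv Φ t + P1 L q τ t * η t
        + ⟪P2 L q τ t, ξ t⟫
        + ⟪P3 L q τ t, deriv ξ t - deriv η t • deriv q t⟫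
        + Lq L q τ t * deriv η t = 0) :
    ∃ c : ℝ, ∀ t ∈ Icc (t₂ - τ) t₂,
      -Φ t + ⟪P3 L q τ t, ξ t⟫
        + (Lq L q τ t - ⟪deriv q t, P3 L q τ t⟫) * η t = c := by
  set F : Xsp n → ℝ := fun p => L p.1 p.2.1 p.2.2.1 p.2.2.2.1 p.2.2.2.2 with hFdef
  have hF : ContDiff ℝ 2 F := hL
  have hc : ContDiff ℝ 1
      (fun t => ((t, q t, deriv q t, q (t - τ), deriv q (t - τ)) : Xsp n)) :=
    curveC1 q hq τ
  -- P3 is C¹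
  have hP3eq : ∀ t, P3 L q τ t = (InnerProductSpace.toDual ℝ (Esp n)).symm
      ((fderiv ℝ F (t, q t, deriv q t, q (t - τ), deriv q (t - τ))).comp (iota3 n)) := by
    intro t
    rw [P3, gradient]
    congr 1
    exact (slot3_hasFDeriv F hF t (q t) (q (t - τ)) (deriv q (t - τ)) (deriv q t)).fderiv
  have hP3c : ContDiff ℝ 1 (P3 L q τ) := by
    have : P3 L q τ = (fun p => (InnerProductSpace.toDual ℝ (Esp n)).symm
        ((fderiv ℝ F p).comp (iota3 n))) ∘
        (fun t => ((t, q t, deriv q t, q (t - τ), deriv q (t - τ)) : Xsp n)) :=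
      funext fun t => hP3eq t
    rw [this]
    exact (Gdiff F hF).comp hc
  have hP3d : Differentiable ℝ (P3 L q τ) := hP3c.differentiable one_ne_zero
  -- Lq is differentiable
  have hLqd : Differentiable ℝ (Lq L q τ) := by
    have : Lq L q τ = F ∘
        (fun t => ((t, q t, deriv q t, q (t - τ), deriv q (t - τ)) : Xsp n)) := rfl
    rw [this]
    exact (hF.differentiable (by norm_num)).comp (hc.differentiable one_ne_zero)
  have hqd : Differentiable ℝ (deriv q) := by
    have := (contDiff_succ_iff_deriv (n := 1) (f := q)).mp (by exact_mod_cast hq)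
    exact this.2.2.differentiable one_ne_zero
  set A : ℝ → ℝ := fun t => Lq L q τ t - ⟪deriv q t, P3 L q τ t⟫ with hAdef
  have hAd : Differentiable ℝ A := hLqd.sub (hqd.inner ℝ hP3d)
  set C : ℝ → ℝ := fun t => -Φ t + ⟪P3 L q τ t, ξ t⟫ + A t * η t with hCdef
  have hCd : Differentiable ℝ C :=
    ((hΦ.differentiable one_ne_zero).neg.add (hP3d.inner ℝ (hξ.differentiable one_ne_zero))).add
      (hAd.mul (hη.differentiable one_ne_zero))
  have key : ∀ t ∈ Icc (t₂ - τ) t₂, deriv C t = 0 := by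
    intro t ht
    have h1 : HasDerivAt Φ (deriv Φ t) t := ((hΦ.differentiable one_ne_zero) t).hasDerivAt
    have h3 : HasDerivAt (P3 L q τ) (deriv (P3 L q τ) t) t := (hP3d t).hasDerivAt
    have hx : HasDerivAt ξ (deriv ξ t) t := ((hξ.differentiable one_ne_zero) t).hasDerivAt
    have hAh : HasDerivAt A (deriv A t) t := (hAd t).hasDerivAt
    have hηh : HasDerivAt η (deriv η t) t := ((hη.differentiable one_ne_zero) t).hasDerivAt
    have hinner : HasDerivAt (fun s => ⟪P3 L q τ s, ξ s⟫)
        (⟪P3 L q τ t, deriv ξ t⟫ + ⟪deriv (P3 L q τ) t, ξ t⟫) t := h3.inner ℝ hx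
    have hCh : HasDerivAt C
        (-deriv Φ t + (⟪P3 L q τ t, deriv ξ t⟫ + ⟪deriv (P3 L q τ) t, ξ t⟫)
          + (deriv A t * η t + A t * deriv η t)) t :=
      (h1.neg.add hinner).add (hAh.mul hηh)
    rw [hCh.deriv]
    have hel : deriv (P3 L q τ) t = P2 L q τ t := hEL t ht
    have hdr : deriv A t = P1 L q τ t := hDR t ht
    have hI := hInv t ht
    rw [inner_sub_right, real_inner_smul_right] at hI
    rw [hel, hdr, hAdef]
    simp only
    rw [real_inner_comm (P3 L q τ t) (deriv q t)]
    linear_combination hI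
  have hcon : ∀ x ∈ Icc (t₂ - τ) t₂, C x = C (t₂ - τ) :=
    constant_of_derivWithin_zero hCd.differentiableOn (fun x hx => by
      rw [(hCd x).derivWithin
        ((uniqueDiffOn_Icc (by linarith : t₂ - τ < t₂)).uniqueDiffWithinAt
          (Ico_subset_Icc_self hx))]
      exact key x (Ico_subset_Icc_self hx))
  exact ⟨C (t₂ - τ), fun t ht => hcon t ht⟩

end
end
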